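/- arXiv:2005.14196 — 5 statements merged into one kernel-verified Lean document; each statement's English description precedes it below -/
import Mathlib

section
/- For every positive odd integer n and every integer k with 0 ≤ k ≤ (n-1)/2, the polynomial congruence (xq;q^2)_{(n-1)/2-k} / (q^2/x;q^2)_{(n-1)/2-k} ≡ (-x)^{(n-1)/2-2k} · (xq;q^2)_k / (q^2/x;q^2)_k · q^{(n-1)^2/4+k} holds modulo the n-th cyclotomic polynomial Φ_n(q), as an identity of rational functions in x over polynomials in q reduced modulo Φ_n(q). -/
open Finset

noncomputable section

abbrev KK : Type := FractionRing (MvPolynomial (Fin 4) ℚ)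
abbrev FF : Type := RatFunc KK

def q : FF := RatFunc.X
def aK : KK := algebraMap (MvPolynomial (Fin 4) ℚ) KK (MvPolynomial.X 0)
def bK : KK := algebraMap (MvPolynomial (Fin 4) ℚ) KK (MvPolynomial.X 1)
def cK : KK := algebraMap (MvPolynomial (Fin 4) ℚ) KK (MvPolynomial.X 2)
def dK : KK := algebraMap (MvPolynomial (Fin 4) ℚ) KK (MvPolynomial.X 3)
def pa : FF := RatFunc.C aK
def pb : FF := RatFunc.C bK
def pc : FF := RatFunc.C cK
def pd : FF := RatFunc.C dK

/-- q-shifted factorial (x; Q)_m = prod_{j<m} (1 - x Q^j) -/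
def qPoch (x Q : FF) (m : ℕ) : FF := ∏ j ∈ Finset.range m, (1 - x * Q ^ j)

/-- q-integer [m] = (1-q^m)/(1-q) -/
def qInt (m : ℕ) : FF := (1 - q ^ m) / (1 - q)

/-- the polynomial [n] = 1 + q + ... + q^{n-1} -/
def Pn (n : ℕ) : Polynomial KK := ∑ i ∈ Finset.range n, Polynomial.X ^ i

/-- congruence of rational functions modulo a polynomial D:
A - B = D * P / Q with Q coprime to D -/
def modCong (A B : FF) (D : Polynomial KK) : Prop :=
  ∃ P Q : Polynomial KK, IsCoprime Q D ∧
    (A - B) * algebraMap (Polynomial KK) FF Q =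
      algebraMap (Polynomial KK) FF D * algebraMap (Polynomial KK) FF P

/-! Write `n = 2m + 1`, so that `q^n ≡ 1` modulo `Φ_n(q)`. Modulo `q^n - 1` the factor
`1 - x q^(2j+1)` equals `-q^(2j+1) (x - q^(2(m-1-j)+2))`, so `(xq; q²)_t` is, up to the sign
`(-1)^t` and the power `q^(t²)`, the product of the last `t` factors of `x^m (q²/x; q²)_m`.
Applying this with `t = m - k` and `t = k` and dividing gives the congruence. The denominators
`x - q^s` are coprime to `q^n - 1`, since the ideal they generate contains the nonzero constant
`x^n - 1`. -/

open Polynomial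

section

variable {R : Type*} [CommRing R]

theorem isCoprime_sub_pow_sub_one {u : R} {n : ℕ}
    (hu : IsUnit (u ^ n - 1)) (y : R) : IsCoprime (u - y) (y ^ n - 1) := by
  obtain ⟨c, hc⟩ := sub_dvd_pow_sub_pow u y n
  refine IsCoprime.of_add_mul_left_right (z := c) ?_
  rw [← hc, sub_add_sub_cancel']
  simpa using (isCoprime_mul_unit_left_right hu (u - y) 1).mpr isCoprime_one_right

/-- `oddPoch a x t = (a x; x²)_t`. -/
def oddPoch (a x : R) (t : ℕ) : R :=
  ∏ j ∈ range t, (1 - a * x ^ (2 * j + 1))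

/-- `evenPoch a x t = a^t (x²/a; x²)_t`, cleared of the denominator `a`. -/
def evenPoch (a x : R) (t : ℕ) : R :=
  ∏ j ∈ range t, (a - x ^ (2 * j + 2))

theorem map_oddPoch {S : Type*} [CommRing S] (f : R →+* S) (a x : R) (t : ℕ) :
    f (oddPoch a x t) = oddPoch (f a) (f x) t := by
  simp [oddPoch, map_prod]

theorem map_evenPoch {S : Type*} [CommRing S] (f : R →+* S) (a x : R) (t : ℕ) :
    f (evenPoch a x t) = evenPoch (f a) (f x) t := by
  simp [evenPoch, map_prod]

theorem oddPoch_mul_evenPoch {a x : R} {t s : ℕ} (hx : x ^ (2 * (t + s) + 1) = 1) :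
    oddPoch a x t * evenPoch a x s = (-1) ^ t * x ^ (t ^ 2) * evenPoch a x (t + s) := by
  induction t generalizing s with
  | zero => simp [oddPoch]
  | succ t ih =>
    have hrefl : x ^ (2 * t + 1) * x ^ (2 * s + 2) = 1 := by
      rw [← pow_add, ← hx]; ring_nf
    have ih' := ih (s := s + 1) (by rw [← hx]; ring_nf)
    rw [oddPoch, prod_range_succ, ← oddPoch]
    rw [evenPoch, prod_range_succ, ← evenPoch, show t + (s + 1) = t + 1 + s by ring] at ih'
    linear_combination (-x ^ (2 * t + 1)) * ih' - oddPoch a x t * evenPoch a x s * hrefl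

theorem oddPoch_mul_evenPoch_swap {a x : R} {k d : ℕ} (hx : x ^ (2 * (k + d) + 1) = 1) :
    oddPoch a x d * evenPoch a x k =
      (-1) ^ (k + d) * x ^ ((k + d) ^ 2 + k) * (oddPoch a x k * evenPoch a x d) := by
  have hdk := oddPoch_mul_evenPoch (a := a) (t := d) (s := k) (by rwa [add_comm d])
  have hkd := oddPoch_mul_evenPoch (a := a) (t := k) (s := d) hx
  have hpow : x ^ ((k + d) ^ 2 + k) * x ^ (k ^ 2) = x ^ (d ^ 2) := by
    rw [← pow_add, show (k + d) ^ 2 + k + k ^ 2 = d ^ 2 + (2 * (k + d) + 1) * k by ring,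
      pow_add, pow_mul, hx, one_pow, mul_one]
  have hsign : (-1 : R) ^ (k + d) * (-1) ^ k = (-1) ^ d := by
    rw [← pow_add, show k + d + k = d + 2 * k by ring, pow_add, pow_mul, neg_one_sq, one_pow,
      mul_one]
  rw [hdk, hkd, add_comm d k, ← hpow, ← hsign]
  ring

theorem X_pow_sub_one_dvd_oddPoch_mul_evenPoch_sub (a : R) (k d : ℕ) :
    (X ^ (2 * (k + d) + 1) - 1 : R[X]) ∣
      oddPoch (C a) X d * evenPoch (C a) X k -
        (-1) ^ (k + d) * X ^ ((k + d) ^ 2 + k) * (oddPoch (C a) X k * evenPoch (C a) X d) := by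
  set f : R[X] := X ^ (2 * (k + d) + 1) - 1
  have hroot : AdjoinRoot.root f ^ (2 * (k + d) + 1) = 1 := by
    have h : AdjoinRoot.mk f f = 0 := AdjoinRoot.mk_self
    rwa [map_sub, map_pow, AdjoinRoot.mk_X, map_one, sub_eq_zero] at h
  rw [← AdjoinRoot.mk_eq_mk]
  simp only [map_mul, map_pow, map_neg, map_one, map_oddPoch, map_evenPoch, AdjoinRoot.mk_X]
  exact oddPoch_mul_evenPoch_swap hroot

end

theorem modCong_div_div {a a' b b' D : KK[X]} (hD : ¬IsUnit D) (ha' : IsCoprime a' D)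
    (hb' : IsCoprime b' D) (h : D ∣ a * b' - b * a') :
    modCong (algebraMap KK[X] FF a / algebraMap KK[X] FF a')
      (algebraMap KK[X] FF b / algebraMap KK[X] FF b') D := by
  have hne {c : KK[X]} (hc : IsCoprime c D) : algebraMap KK[X] FF c ≠ 0 := by
    rw [map_ne_zero_iff _ (RatFunc.algebraMap_injective KK)]
    rintro rfl
    exact hD (isCoprime_zero_left.mp hc)
  obtain ⟨W, hW⟩ := h
  refine ⟨W, a' * b', ha'.mul_left hb', ?_⟩
  rw [← map_mul, ← hW]
  field_simp [hne ha', hne hb']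
  simp only [map_sub, map_mul]
  ring

theorem qPoch_mul_sq (y x : FF) (t : ℕ) : qPoch (y * x) (x ^ 2) t = oddPoch y x t := by
  refine prod_congr rfl fun j _ => ?_
  ring

theorem qPoch_sq_div {y : FF} (hy : y ≠ 0) (x : FF) (t : ℕ) :
    qPoch (x ^ 2 / y) (x ^ 2) t = evenPoch y x t / y ^ t := by
  rw [eq_div_iff (pow_ne_zero t hy), qPoch, evenPoch]
  nth_rw 2 [← card_range t]
  rw [prod_mul_pow_card]
  refine prod_congr rfl fun j _ => ?_
  field_simp
  ring

theorem aK_pow_ne_one {n : ℕ} (hn : 0 < n) : aK ^ n ≠ 1 := by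
  intro h
  have hX : (MvPolynomial.X 0 : MvPolynomial (Fin 4) ℚ) ^ n = 1 :=
    IsFractionRing.injective (MvPolynomial (Fin 4) ℚ) KK (by rw [map_pow, map_one]; exact h)
  simpa [zero_pow hn.ne'] using congrArg MvPolynomial.constantCoeff hX

theorem pa_ne_zero : pa ≠ 0 := by
  refine (map_ne_zero_iff _ (RatFunc.C (K := KK)).injective).mpr ?_
  exact (map_ne_zero_iff _ (IsFractionRing.injective (MvPolynomial (Fin 4) ℚ) KK)).mpr
    (MvPolynomial.X_ne_zero 0)

theorem algebraMap_C_aK : algebraMap KK[X] FF (C aK) = pa := RatFunc.algebraMap_C aK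

theorem algebraMap_X_eq_q : algebraMap KK[X] FF X = q := RatFunc.algebraMap_X

theorem qPoch_div_qPoch (t : ℕ) :
    qPoch (pa * q) (q ^ 2) t / qPoch (q ^ 2 / pa) (q ^ 2) t =
      algebraMap KK[X] FF (C aK ^ t * oddPoch (C aK) X t) /
        algebraMap KK[X] FF (evenPoch (C aK) X t) := by
  rw [qPoch_mul_sq, qPoch_sq_div pa_ne_zero, div_div_eq_mul_div, mul_comm]
  simp only [map_mul, map_pow, map_oddPoch, map_evenPoch, algebraMap_C_aK, algebraMap_X_eq_q]

theorem isCoprime_evenPoch_cyclotomic {n : ℕ} (hn : 0 < n) (t : ℕ) :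
    IsCoprime (evenPoch (C aK) X t) (cyclotomic n KK) := by
  refine IsCoprime.prod_left fun j _ => ?_
  have hunit : IsUnit ((C aK : KK[X]) ^ n - 1) := by
    rw [← C_pow, ← C_1, ← C_sub, isUnit_C, isUnit_iff_ne_zero, sub_ne_zero]
    exact aK_pow_ne_one hn
  refine (isCoprime_sub_pow_sub_one hunit (X ^ (2 * j + 2))).of_isCoprime_of_dvd_right ?_
  rw [← pow_mul, mul_comm, pow_mul]
  exact (cyclotomic.dvd_X_pow_sub_one n KK).trans (sub_one_dvd_pow_sub_one _ _)

theorem stmt0_general (n : ℕ) (hodd : Odd n) (k : ℕ) (hk : k ≤ (n - 1) / 2) :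
    modCong
      (qPoch (pa * q) (q ^ 2) ((n - 1) / 2 - k) / qPoch (q ^ 2 / pa) (q ^ 2) ((n - 1) / 2 - k))
      ((-pa) ^ (((n : ℤ) - 1) / 2 - 2 * (k : ℤ)) *
        (qPoch (pa * q) (q ^ 2) k / qPoch (q ^ 2 / pa) (q ^ 2) k) *
        q ^ ((n - 1) ^ 2 / 4 + k))
      (Polynomial.cyclotomic n KK) := by
  have hn := hodd.pos
  obtain ⟨m, rfl⟩ := hodd
  obtain ⟨d, rfl⟩ := Nat.exists_eq_add_of_le (show k ≤ m by omega)
  have hhalf : (2 * (k + d) + 1 - 1) / 2 = k + d := by omega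
  have hsq : (2 * (k + d) + 1 - 1) ^ 2 / 4 = (k + d) ^ 2 := by
    rw [Nat.add_sub_cancel, mul_pow]; omega
  have hexp : (((2 * (k + d) + 1 : ℕ) : ℤ) - 1) / 2 - 2 * k =
      ((k + d : ℕ) : ℤ) - ((2 * k : ℕ) : ℤ) := by omega
  rw [hhalf, hsq, hexp, Nat.add_sub_cancel_left, zpow_sub₀ (neg_ne_zero.mpr pa_ne_zero),
    zpow_natCast, zpow_natCast, pow_mul, neg_sq, qPoch_div_qPoch, qPoch_div_qPoch]
  have hB : (-pa) ^ (k + d) / (pa ^ 2) ^ k *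
      (algebraMap KK[X] FF (C aK ^ k * oddPoch (C aK) X k) /
        algebraMap KK[X] FF (evenPoch (C aK) X k)) * q ^ ((k + d) ^ 2 + k) =
      algebraMap KK[X] FF ((-1) ^ (k + d) * C aK ^ d * X ^ ((k + d) ^ 2 + k) * oddPoch (C aK) X k) /
        algebraMap KK[X] FF (evenPoch (C aK) X k) := by
    simp only [map_mul, map_pow, map_neg, map_one, algebraMap_C_aK, algebraMap_X_eq_q]
    rw [neg_pow]
    field_simp [pa_ne_zero]
    ring
  rw [hB]
  refine modCong_div_div (not_isUnit_of_degree_pos _ (degree_cyclotomic_pos _ _ hn))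
    (isCoprime_evenPoch_cyclotomic hn d) (isCoprime_evenPoch_cyclotomic hn k) ?_
  refine (cyclotomic.dvd_X_pow_sub_one _ _).trans ?_
  convert (X_pow_sub_one_dvd_oddPoch_mul_evenPoch_sub aK k d).mul_left (C aK ^ d) using 1
  ring

theorem stmt0 (n : ℕ) (hn : 0 < n) (hodd : Odd n) (k : ℕ) (hk : k ≤ (n - 1) / 2) :
    modCong
      (qPoch (pa * q) (q ^ 2) ((n - 1) / 2 - k) / qPoch (q ^ 2 / pa) (q ^ 2) ((n - 1) / 2 - k))
      ((-pa) ^ (((n : ℤ) - 1) / 2 - 2 * (k : ℤ)) *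
        (qPoch (pa * q) (q ^ 2) k / qPoch (q ^ 2 / pa) (q ^ 2) k) *
        q ^ ((n - 1) ^ 2 / 4 + k))
      (Polynomial.cyclotomic n KK) :=
  stmt0_general n hodd k hk
end
end

section
/- For every positive odd integer n and every integer k with 0 ≤ k ≤ (n-1)/2, one has the identity [n] · (q^{1-n},q^{1+n};q^2)_k / (q^{2-n},q^{2+n};q^2)_k = ((q;q^2)_{(n-1)/2-k} / (q^2;q^2)_{(n-1)/2-k}) · Σ_{j=0}^{(n-1)/2+k} (-1)^j q^{j^2+j-k} · binom_{q^2}((n-1)/2+k, j) · [n]^2/[1+2j], where binom_{q^2} denotes the Gaussian binomial coefficient with base q^2. -/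
open Finset

noncomputable section

/-!
Write `n = 2m + 1` and `Q = q²`. Up to the factor `q^{-k} [n]² (1 - q)`, the sum on the right is
the partial fraction expansion
  `∑_{j ≤ N} (-1)^j q^{j² + j} [N, j]_Q / (1 - x Q^j) = (Q; Q)_N / (x; Q)_{N+1}`
at `x = q`, `N = m + k`; this expansion follows by induction on `N` from the q-Pascal rule,
since it turns the sum for `N + 1` into the sum at `x` minus `Q^{N+1}` times the sum at `xQ`.
What is left is an identity of products: reflecting `i ↦ k - 1 - i` turns `(Q^{-m}; Q)_k` and
`(q Q^{-m}; Q)_k` into `(Q; Q)_m / (Q; Q)_{m-k}` and `(q; Q)_m / (q; Q)_{m-k}`, up to powers of `q`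
whose ratio is `q^{-k}`.
-/

section QPochhammer

variable (x Q : FF)

theorem qPoch_zero : qPoch x Q 0 = 1 := prod_range_zero _

theorem qPoch_succ (N : ℕ) : qPoch x Q (N + 1) = qPoch x Q N * (1 - x * Q ^ N) :=
  prod_range_succ _ _

theorem qPoch_succ' (N : ℕ) : qPoch x Q (N + 1) = (1 - x) * qPoch (x * Q) Q N := by
  simp only [qPoch, prod_range_succ', pow_succ, pow_zero, mul_one, mul_assoc, mul_comm]

theorem qPoch_add (M N : ℕ) : qPoch x Q (M + N) = qPoch x Q M * qPoch (x * Q ^ M) Q N := by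
  simp only [qPoch, prod_range_add, pow_add, mul_assoc]

variable {x Q}

theorem qPoch_ne_zero_of_le {M N : ℕ} (h : qPoch x Q N ≠ 0) (hMN : M ≤ N) : qPoch x Q M ≠ 0 := by
  obtain ⟨L, rfl⟩ := Nat.exists_eq_add_of_le hMN
  exact left_ne_zero_of_mul (qPoch_add x Q M L ▸ h)

theorem qPoch_mul_zpow_neg_mul {a : FF} (ha : a ≠ 0) (hQ : Q ≠ 0) {k m : ℕ} (hk : k ≤ m) :
    qPoch (a * Q ^ (-(m : ℤ))) Q k * qPoch (a⁻¹ * Q) Q (m - k) =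
      (∏ i ∈ range k, -(a * Q ^ ((i : ℤ) - m))) * qPoch (a⁻¹ * Q) Q m := by
  obtain ⟨l, rfl⟩ := Nat.exists_eq_add_of_le' hk
  rw [Nat.add_sub_cancel, qPoch_add, mul_comm (qPoch _ Q l), ← mul_assoc]
  congr 1
  rw [qPoch, qPoch, ← prod_range_reflect (fun j ↦ 1 - a⁻¹ * Q * Q ^ l * Q ^ j), ← prod_mul_distrib]
  refine prod_congr rfl fun i hi => ?_
  obtain ⟨r, rfl⟩ := Nat.exists_eq_add_of_lt (mem_range.mp hi)
  rw [show i + r + 1 - 1 - i = r by omega, zpow_sub₀ hQ, zpow_neg, zpow_natCast, zpow_natCast]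
  field_simp
  ring

end QPochhammer

def qBinom (Q : FF) (N j : ℕ) : FF := qPoch Q Q N / (qPoch Q Q j * qPoch Q Q (N - j))

section QBinomial

variable {Q : FF} {N : ℕ}

theorem qBinom_zero_right (hN : qPoch Q Q N ≠ 0) : qBinom Q N 0 = 1 := by
  simp [qBinom, qPoch_zero, hN]

theorem qBinom_self (hN : qPoch Q Q N ≠ 0) : qBinom Q N N = 1 := by
  simp [qBinom, qPoch_zero, hN]

theorem qBinom_succ_succ {j : ℕ} (hj : j < N) (hN : qPoch Q Q N ≠ 0) :
    qBinom Q (N + 1) (j + 1) = qBinom Q N (j + 1) + Q ^ (N - j) * qBinom Q N j := by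
  obtain ⟨d, rfl⟩ := Nat.exists_eq_add_of_lt hj
  have hj : qPoch Q Q (j + 1) ≠ 0 := qPoch_ne_zero_of_le hN (by omega)
  have hd : qPoch Q Q (d + 1) ≠ 0 := qPoch_ne_zero_of_le hN (by omega)
  rw [qPoch_succ] at hj hd
  obtain ⟨hj₀, hj₁⟩ := mul_ne_zero_iff.mp hj
  obtain ⟨hd₀, hd₁⟩ := mul_ne_zero_iff.mp hd
  simp only [qBinom, show j + d + 1 + 1 - (j + 1) = d + 1 by omega,
    show j + d + 1 - (j + 1) = d by omega, show j + d + 1 - j = d + 1 by omega,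
    qPoch_succ Q Q (j + d + 1), qPoch_succ Q Q j, qPoch_succ Q Q d]
  field_simp
  ring

end QBinomial

theorem Finset.sum_range_add_two_of_pascal {M : Type*} [AddCommMonoid M] (f g h : ℕ → M) (N : ℕ)
    (h_zero : f 0 = g 0) (h_succ : ∀ j < N, f (j + 1) = g (j + 1) + h j) (h_top : f (N + 1) = h N) :
    ∑ j ∈ range (N + 2), f j = ∑ j ∈ range (N + 1), g j + ∑ j ∈ range (N + 1), h j := by
  rw [sum_range_succ', sum_range_succ, sum_range_succ' g, sum_range_succ h, h_zero, h_top,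
    sum_congr rfl fun j hj => h_succ j (mem_range.mp hj), sum_add_distrib]
  abel

def partialFracTerm (p x : FF) (N j : ℕ) : FF :=
  (-1) ^ j * p ^ (j ^ 2 + j) * qBinom (p ^ 2) N j / (1 - x * (p ^ 2) ^ j)

theorem sum_partialFracTerm (p : FF) (N : ℕ) (x : FF) (hQ : qPoch (p ^ 2) (p ^ 2) N ≠ 0)
    (hx : qPoch x (p ^ 2) (N + 1) ≠ 0) :
    ∑ j ∈ range (N + 1), partialFracTerm p x N j =
      qPoch (p ^ 2) (p ^ 2) N / qPoch x (p ^ 2) (N + 1) := by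
  induction N generalizing x with
  | zero => simp [partialFracTerm, qPoch, qBinom]
  | succ N ih =>
    have hQ' : qPoch (p ^ 2) (p ^ 2) N ≠ 0 := qPoch_ne_zero_of_le hQ N.le_succ
    have hrec : ∑ j ∈ range (N + 2), partialFracTerm p x (N + 1) j =
        ∑ j ∈ range (N + 1), partialFracTerm p x N j +
          ∑ j ∈ range (N + 1), -(p ^ 2) ^ (N + 1) * partialFracTerm p (x * p ^ 2) N j := by
      apply Finset.sum_range_add_two_of_pascal
      · simp only [partialFracTerm, qBinom_zero_right hQ, qBinom_zero_right hQ']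
      · intro j hj
        simp only [partialFracTerm, qBinom_succ_succ hj hQ']
        obtain ⟨d, rfl⟩ := Nat.exists_eq_add_of_lt hj
        rw [show j + d + 1 - j = d + 1 by omega]
        ring
      · simp only [partialFracTerm, qBinom_self hQ, qBinom_self hQ']
        ring
    have hx₁ : qPoch x (p ^ 2) (N + 1) ≠ 0 := qPoch_ne_zero_of_le hx (N + 1).le_succ
    have hxQ : qPoch (x * p ^ 2) (p ^ 2) (N + 1) ≠ 0 := by
      rw [qPoch_succ'] at hx; exact right_ne_zero_of_mul hx
    rw [hrec, ← mul_sum, ih x hQ' hx₁, ih (x * p ^ 2) hQ' hxQ, qPoch_succ (p ^ 2) (p ^ 2) N,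
      mul_div_assoc', div_add_div _ _ hx₁ hxQ, div_eq_div_iff (mul_ne_zero hx₁ hxQ) hx]
    linear_combination
      (qPoch (p ^ 2) (p ^ 2) N * qPoch (x * p ^ 2) (p ^ 2) (N + 1)) * qPoch_succ x (p ^ 2) (N + 1) -
        ((p ^ 2) ^ (N + 1) * qPoch (p ^ 2) (p ^ 2) N * qPoch x (p ^ 2) (N + 1)) *
          qPoch_succ' x (p ^ 2) (N + 1)

theorem q_ne_zero : q ≠ 0 := RatFunc.X_ne_zero

theorem q_pow_ne_one {s : ℕ} (hs : s ≠ 0) : q ^ s ≠ 1 := by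
  intro h
  have h' : (Polynomial.X : Polynomial KK) ^ s = 1 :=
    RatFunc.algebraMap_injective KK (by simpa [q, RatFunc.algebraMap_X] using h)
  simpa [hs] using congrArg Polynomial.natDegree h'

theorem one_sub_q_pow_ne_zero {s : ℕ} (hs : s ≠ 0) : 1 - q ^ s ≠ 0 :=
  sub_ne_zero.mpr (q_pow_ne_one hs).symm

theorem qPoch_q_pow_ne_zero {r : ℕ} (hr : r ≠ 0) (d N : ℕ) : qPoch (q ^ r) (q ^ d) N ≠ 0 :=
  prod_ne_zero_iff.mpr fun i _ => by
    rw [← pow_mul, ← pow_add]; exact one_sub_q_pow_ne_zero (by omega)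

theorem qPoch_q_ne_zero (N : ℕ) : qPoch q (q ^ 2) N ≠ 0 := by
  simpa using qPoch_q_pow_ne_zero one_ne_zero 2 N

theorem qPoch_q_sq_ne_zero (N : ℕ) : qPoch (q ^ 2) (q ^ 2) N ≠ 0 :=
  qPoch_q_pow_ne_zero two_ne_zero 2 N

theorem sum_qBinom_mul_qInt_sq_div (n N k : ℕ) :
    ∑ j ∈ range (N + 1), (-1 : FF) ^ j * q ^ ((j : ℤ) ^ 2 + (j : ℤ) - (k : ℤ)) *
        qBinom (q ^ 2) N j * ((qInt n) ^ 2 / qInt (1 + 2 * j)) =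
      (q ^ k)⁻¹ * qInt n ^ 2 * (1 - q) * (qPoch (q ^ 2) (q ^ 2) N / qPoch q (q ^ 2) (N + 1)) := by
  rw [← sum_partialFracTerm q N q (qPoch_q_sq_ne_zero N) (qPoch_q_ne_zero _), mul_sum]
  refine sum_congr rfl fun j _ => ?_
  rw [show (j : ℤ) ^ 2 + j - k = ((j ^ 2 + j : ℕ) : ℤ) - (k : ℕ) by push_cast; ring,
    zpow_sub₀ q_ne_zero, zpow_natCast, zpow_natCast, partialFracTerm, qInt, qInt,
    show q * (q ^ 2) ^ j = q ^ (1 + 2 * j) by ring]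
  field_simp

theorem qPoch_reflect_div {m k : ℕ} (hk : k ≤ m) :
    qPoch (q ^ (1 - ((2 * m + 1 : ℕ) : ℤ))) (q ^ 2) k /
        qPoch (q ^ (2 - ((2 * m + 1 : ℕ) : ℤ))) (q ^ 2) k =
      (q ^ k)⁻¹ * (qPoch (q ^ 2) (q ^ 2) m / qPoch (q ^ 2) (q ^ 2) (m - k)) *
        (qPoch q (q ^ 2) (m - k) / qPoch q (q ^ 2) m) := by
  have hq := q_ne_zero
  have hq₂ : q ^ 2 ≠ 0 := pow_ne_zero 2 hq
  have h₁ := qPoch_mul_zpow_neg_mul one_ne_zero hq₂ hk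
  have h₂ := qPoch_mul_zpow_neg_mul hq hq₂ hk
  simp only [inv_one, one_mul] at h₁
  rw [show q⁻¹ * q ^ 2 = q by field_simp] at h₂
  have hexp₁ : q ^ (1 - ((2 * m + 1 : ℕ) : ℤ)) = (q ^ 2) ^ (-(m : ℤ)) := by
    rw [← zpow_natCast q 2, ← zpow_mul]; push_cast; ring_nf
  have hexp₂ : q ^ (2 - ((2 * m + 1 : ℕ) : ℤ)) = q * (q ^ 2) ^ (-(m : ℤ)) := by
    rw [← zpow_natCast q 2, ← zpow_mul, ← zpow_one_add₀ hq]; push_cast; ring_nf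
  have hprod : ∏ i ∈ range k, -(q * (q ^ 2) ^ ((i : ℤ) - m)) =
      q ^ k * ∏ i ∈ range k, -((q ^ 2) ^ ((i : ℤ) - m)) := by
    simp only [← mul_neg, prod_mul_distrib, prod_const, card_range]
  have hP : ∏ i ∈ range k, -((q ^ 2) ^ ((i : ℤ) - m)) ≠ 0 :=
    prod_ne_zero_iff.mpr fun i _ => neg_ne_zero.mpr (zpow_ne_zero _ hq₂)
  rw [hexp₁, hexp₂, eq_div_of_mul_eq (qPoch_q_sq_ne_zero _) h₁,
    eq_div_of_mul_eq (qPoch_q_ne_zero _) h₂, hprod]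
  field_simp

theorem stmt2_general (n : ℕ) (hodd : Odd n) (k : ℕ) (hk : k ≤ (n - 1) / 2) :
    qInt n * (qPoch (q ^ (1 - (n : ℤ))) (q ^ 2) k * qPoch (q ^ (1 + n)) (q ^ 2) k) /
        (qPoch (q ^ (2 - (n : ℤ))) (q ^ 2) k * qPoch (q ^ (2 + n)) (q ^ 2) k) =
      (qPoch q (q ^ 2) ((n - 1) / 2 - k) / qPoch (q ^ 2) (q ^ 2) ((n - 1) / 2 - k)) *
        ∑ j ∈ Finset.range ((n - 1) / 2 + k + 1),
          (-1 : FF) ^ j * q ^ ((j : ℤ) ^ 2 + (j : ℤ) - (k : ℤ)) *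
            (qPoch (q ^ 2) (q ^ 2) ((n - 1) / 2 + k) /
              (qPoch (q ^ 2) (q ^ 2) j * qPoch (q ^ 2) (q ^ 2) ((n - 1) / 2 + k - j))) *
            ((qInt n) ^ 2 / qInt (1 + 2 * j)) := by
  obtain ⟨m, rfl⟩ := hodd
  rw [show (2 * m + 1 - 1) / 2 = m by omega] at hk ⊢
  simp only [← qBinom.eq_1]
  have hQ_split : qPoch (q ^ 2) (q ^ 2) (m + k) =
      qPoch (q ^ 2) (q ^ 2) m * qPoch (q ^ (1 + (2 * m + 1))) (q ^ 2) k := by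
    rw [qPoch_add]; ring_nf
  have hq_split : qPoch q (q ^ 2) (m + k + 1) =
      qPoch q (q ^ 2) m * (1 - q ^ (2 * m + 1)) * qPoch (q ^ (2 + (2 * m + 1))) (q ^ 2) k := by
    rw [add_right_comm, qPoch_add, qPoch_succ]; ring_nf
  rw [sum_qBinom_mul_qInt_sq_div, mul_div_assoc, mul_div_mul_comm, qPoch_reflect_div hk, hQ_split, hq_split,
    qInt]
  field_simp

theorem stmt2 (n : ℕ) (hn : 0 < n) (hodd : Odd n) (k : ℕ) (hk : k ≤ (n - 1) / 2) :
    qInt n * (qPoch (q ^ (1 - (n : ℤ))) (q ^ 2) k * qPoch (q ^ (1 + n)) (q ^ 2) k) /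
        (qPoch (q ^ (2 - (n : ℤ))) (q ^ 2) k * qPoch (q ^ (2 + n)) (q ^ 2) k) =
      (qPoch q (q ^ 2) ((n - 1) / 2 - k) / qPoch (q ^ 2) (q ^ 2) ((n - 1) / 2 - k)) *
        ∑ j ∈ Finset.range ((n - 1) / 2 + k + 1),
          (-1 : FF) ^ j * q ^ ((j : ℤ) ^ 2 + (j : ℤ) - (k : ℤ)) *
            (qPoch (q ^ 2) (q ^ 2) ((n - 1) / 2 + k) /
              (qPoch (q ^ 2) (q ^ 2) j * qPoch (q ^ 2) (q ^ 2) ((n - 1) / 2 + k - j))) *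
            ((qInt n) ^ 2 / qInt (1 + 2 * j)) :=
  stmt2_general n hodd k hk
end
end

section
/- For every positive odd integer n, one has the congruences (aq^2, q^2/a; q^2)_{(n-1)/2} ≡ (-1)^{(n-1)/2} (1-a^n) q^{-(n-1)^2/4} / ((1-a) a^{(n-1)/2}) (mod Φ_n(q)) and (aq, q/a; q^2)_{(n-1)/2} ≡ (-1)^{(n-1)/2} (1-a^n) q^{(1-n^2)/4} / ((1-a) a^{(n-1)/2}) (mod Φ_n(q)), as congruences of rational functions in q and a. -/
open Finset

noncomputable section

/-!
Write `n = 2m + 1` and let `ζ` be a primitive `n`-th root of unity. As `ζ^{-k} = ζ^{n-k}`,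
the substitution `q = ζ` turns `a^m (q²/a; q²)_m` into `(-1)^m ζ^{m(m+1)} (aq; q²)_m`, and
`a^m (q/a; q²)_m` into `(-1)^m ζ^{m²} (aq²; q²)_m`. So in both cases, if `q^{-t}` is the power
of `q` on the right, `(1 - a) a^m q^t` times the left-hand side becomes
`(-1)^m ∏_{k<n} (1 - aζ^k) = (-1)^m (1 - a^n)`. Hence `(1 - a) a^m q^t (LHS - RHS)` is a
polynomial vanishing at every root of the separable polynomial `Φ_n`, and `(1 - a) a^m q^t` is
prime to `Φ_n`.
-/

open Polynomial

theorem Finset.prod_range_two_mul {M : Type*} [CommMonoid M] (f : ℕ → M) (m : ℕ) :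
    ∏ k ∈ range (2 * m), f k = ∏ j ∈ range m, f (2 * j) * f (2 * j + 1) := by
  induction m with
  | zero => simp
  | succ m ih =>
    rw [mul_add_one, prod_range_succ, prod_range_succ, prod_range_succ, ih, mul_assoc]

section RootsOfUnity

variable {L : Type*} [Field L]

theorem IsPrimitiveRoot.prod_range_one_sub_mul_pow {n : ℕ} (hn : 0 < n) {ζ : L}
    (hζ : IsPrimitiveRoot ζ n) (x : L) : ∏ k ∈ range n, (1 - x * ζ ^ k) = 1 - x ^ n := by
  have : NeZero n := ⟨hn.ne'⟩
  rw [← one_pow n, hζ.pow_sub_pow_eq_prod_sub_mul 1 x hn, one_pow]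
  refine prod_nbij (ζ ^ ·) (fun k _ => ?_) hζ.injOn_pow (fun μ hμ => ?_) fun k _ => by ring
  · rw [Polynomial.mem_nthRootsFinset hn, ← pow_mul, mul_comm, pow_mul, hζ.pow_eq_one, one_pow]
  · obtain ⟨k, hk, rfl⟩ :=
      hζ.eq_pow_of_pow_eq_one ((Polynomial.mem_nthRootsFinset hn 1).1 hμ)
    exact ⟨k, mem_range.2 hk, rfl⟩

theorem IsPrimitiveRoot.one_sub_mul_prod_odd_mul_prod_even {m : ℕ} {ζ : L}
    (hζ : IsPrimitiveRoot ζ (2 * m + 1)) (α : L) :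
    (1 - α) * (∏ j ∈ range m, (1 - α * ζ ^ (2 * j + 1))) *
        ∏ j ∈ range m, (1 - α * ζ ^ (2 * j + 2)) =
      1 - α ^ (2 * m + 1) := by
  rw [← hζ.prod_range_one_sub_mul_pow (2 * m).succ_pos, prod_range_succ', prod_range_two_mul,
    mul_assoc, ← prod_mul_distrib, pow_zero, mul_one, mul_comm]

theorem pow_mul_prod_one_sub_inv_mul {n m : ℕ} {ζ α : L} (hζ : ζ ^ n = 1) (hα : α ≠ 0)
    {f g : ℕ → ℕ} (hfg : ∀ j < m, f j + g (m - 1 - j) = n) :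
    α ^ m * ∏ j ∈ range m, (1 - α⁻¹ * ζ ^ f j) =
      (-1) ^ m * ζ ^ (∑ j ∈ range m, f j) * ∏ j ∈ range m, (1 - α * ζ ^ g j) := by
  have hfactor :
      ∀ j < m, α * (1 - α⁻¹ * ζ ^ f j) = -ζ ^ f j * (1 - α * ζ ^ g (m - 1 - j)) := by
    intro j hj
    have hpair : ζ ^ f j * ζ ^ g (m - 1 - j) = 1 := by rw [← pow_add, hfg j hj, hζ]
    field_simp
    linear_combination (-α) * hpair
  calc α ^ m * ∏ j ∈ range m, (1 - α⁻¹ * ζ ^ f j)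
      = ∏ j ∈ range m, (-ζ ^ f j) * (1 - α * ζ ^ g (m - 1 - j)) := by
        rw [show α ^ m = ∏ _j ∈ range m, α by simp, ← prod_mul_distrib]
        exact prod_congr rfl fun j hj => hfactor j (mem_range.1 hj)
    _ = _ := by
        rw [prod_mul_distrib, prod_range_reflect (fun j => 1 - α * ζ ^ g j), prod_neg,
          prod_pow_eq_pow_sum, card_range]

theorem IsPrimitiveRoot.pow_mul_prod_even_eq {m : ℕ} {ζ α : L}
    (hζ : IsPrimitiveRoot ζ (2 * m + 1)) (hα : α ≠ 0) :
    ζ ^ (m * m) * ((1 - α) * α ^ m) *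
        ∏ j ∈ range m, (1 - α * ζ ^ (2 * j + 2)) * (1 - α⁻¹ * ζ ^ (2 * j + 2)) =
      (-1) ^ m * (1 - α ^ (2 * m + 1)) := by
  have hsum (k : ℕ) : ∑ j ∈ range k, (2 * j + 2) = k * (k + 1) := by
    induction k with
    | zero => rfl
    | succ k ih => rw [sum_range_succ, ih]; ring
  have hflip := pow_mul_prod_one_sub_inv_mul (m := m) (f := fun j => 2 * j + 2)
    (g := fun j => 2 * j + 1) hζ.pow_eq_one hα fun j hj => by omega
  have hone : ζ ^ (m * m) * ζ ^ (m * (m + 1)) = 1 := by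
    rw [← pow_add, show m * m + m * (m + 1) = (2 * m + 1) * m by ring, pow_mul, hζ.pow_eq_one,
      one_pow]
  have hsplit := hζ.one_sub_mul_prod_odd_mul_prod_even α
  rw [hsum] at hflip
  rw [prod_mul_distrib]
  set E := ∏ j ∈ range m, (1 - α * ζ ^ (2 * j + 2))
  set O := ∏ j ∈ range m, (1 - α * ζ ^ (2 * j + 1))
  linear_combination ζ ^ (m * m) * (1 - α) * E * hflip + (-1) ^ m * (1 - α) * O * E * hone +
    (-1) ^ m * hsplit

theorem IsPrimitiveRoot.pow_mul_prod_odd_eq {m : ℕ} {ζ α : L}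
    (hζ : IsPrimitiveRoot ζ (2 * m + 1)) (hα : α ≠ 0) :
    ζ ^ (m * (m + 1)) * ((1 - α) * α ^ m) *
        ∏ j ∈ range m, (1 - α * ζ ^ (2 * j + 1)) * (1 - α⁻¹ * ζ ^ (2 * j + 1)) =
      (-1) ^ m * (1 - α ^ (2 * m + 1)) := by
  have hsum (k : ℕ) : ∑ j ∈ range k, (2 * j + 1) = k * k := by
    induction k with
    | zero => rfl
    | succ k ih => rw [sum_range_succ, ih]; ring
  have hflip := pow_mul_prod_one_sub_inv_mul (m := m) (f := fun j => 2 * j + 1)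
    (g := fun j => 2 * j + 2) hζ.pow_eq_one hα fun j hj => by omega
  have hone : ζ ^ (m * (m + 1)) * ζ ^ (m * m) = 1 := by
    rw [← pow_add, show m * (m + 1) + m * m = (2 * m + 1) * m by ring, pow_mul, hζ.pow_eq_one,
      one_pow]
  have hsplit := hζ.one_sub_mul_prod_odd_mul_prod_even α
  rw [hsum] at hflip
  rw [prod_mul_distrib]
  set E := ∏ j ∈ range m, (1 - α * ζ ^ (2 * j + 2))
  set O := ∏ j ∈ range m, (1 - α * ζ ^ (2 * j + 1))
  linear_combination ζ ^ (m * (m + 1)) * (1 - α) * O * hflip +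
    (-1) ^ m * (1 - α) * O * E * hone + (-1) ^ m * hsplit

end RootsOfUnity

theorem Polynomial.cyclotomic_dvd_of_forall_aeval_eq_zero {K : Type*} [Field K] {n : ℕ}
    [NeZero (n : K)] {p : K[X]}
    (h : ∀ ζ : AlgebraicClosure K, IsPrimitiveRoot ζ n → aeval ζ p = 0) :
    cyclotomic n K ∣ p := by
  rcases eq_or_ne p 0 with rfl | hp
  · exact dvd_zero _
  have hinj := (algebraMap K (AlgebraicClosure K)).injective
  have : NeZero (n : AlgebraicClosure K) := NeZero.nat_of_injective hinj
  rw [← map_dvd_map _ hinj (cyclotomic.monic n K), map_cyclotomic]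
  refine (IsAlgClosed.splits _).dvd_of_roots_le_roots (cyclotomic_ne_zero n _) ?_
  rw [Multiset.le_iff_subset roots_cyclotomic_nodup]
  intro ζ hζ
  rw [mem_roots (map_ne_zero hp), IsRoot, eval_map_algebraMap]
  exact h ζ (isRoot_cyclotomic_iff.1 (isRoot_of_mem_roots hζ))

theorem Polynomial.isCoprime_X_cyclotomic {K : Type*} [Field K] {n : ℕ} (hn : 0 < n) :
    IsCoprime X (cyclotomic n K) := by
  refine irreducible_X.coprime_iff_not_dvd.2 fun hX => ?_
  have := X_dvd_iff.1 (hX.trans (cyclotomic.dvd_X_pow_sub_one n K))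
  simp [if_neg hn.ne] at this

theorem aK_ne_zero : aK ≠ 0 := by
  rw [aK, ne_eq, map_eq_zero_iff _ (IsFractionRing.injective _ _)]
  exact MvPolynomial.X_ne_zero 0

theorem aK_ne_one : aK ≠ 1 := by
  rw [aK, ne_eq, ← map_one (algebraMap (MvPolynomial (Fin 4) ℚ) KK),
    (IsFractionRing.injective _ _).eq_iff]
  intro h
  simpa using congrArg (MvPolynomial.eval 0) h

theorem one_sub_pa_ne_zero : 1 - pa ≠ 0 := by
  rw [sub_ne_zero, pa, ← map_one RatFunc.C]
  exact fun h => aK_ne_one (RatFunc.C.injective h).symm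

theorem modCong_of_dvd {A B : FF} {D P Q R : KK[X]} (hQ : IsCoprime Q D)
    (hA : A = algebraMap KK[X] FF P) (hB : B * algebraMap KK[X] FF Q = algebraMap KK[X] FF R)
    (hdvd : D ∣ Q * P - R) : modCong A B D := by
  obtain ⟨S, hS⟩ := hdvd
  refine ⟨S, Q, hQ, ?_⟩
  rw [sub_mul, hA, hB, ← map_mul, ← map_sub, ← map_mul, mul_comm P, hS]

theorem qPoch_mul_qPoch_eq_algebraMap (x : KK) (r m : ℕ) :
    qPoch (RatFunc.C x * q ^ r) (q ^ 2) m * qPoch (q ^ r / RatFunc.C x) (q ^ 2) m =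
      algebraMap KK[X] FF
        (∏ j ∈ range m, (1 - C x * X ^ (2 * j + r)) * (1 - C x⁻¹ * X ^ (2 * j + r))) := by
  rw [qPoch, qPoch, ← prod_mul_distrib, map_prod]
  refine prod_congr rfl fun j _ => ?_
  simp only [map_mul, map_sub, map_one, map_pow, RatFunc.algebraMap_C, RatFunc.algebraMap_X,
    map_inv₀, q]
  ring

theorem modCong_qPoch_mul_qPoch (m r t : ℕ)
    (h : ∀ ζ α : AlgebraicClosure KK, IsPrimitiveRoot ζ (2 * m + 1) → α ≠ 0 →
      ζ ^ t * ((1 - α) * α ^ m) *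
          ∏ j ∈ range m, (1 - α * ζ ^ (2 * j + r)) * (1 - α⁻¹ * ζ ^ (2 * j + r)) =
        (-1) ^ m * (1 - α ^ (2 * m + 1))) :
    modCong (qPoch (pa * q ^ r) (q ^ 2) m * qPoch (q ^ r / pa) (q ^ 2) m)
      ((-1 : FF) ^ m * (1 - pa ^ (2 * m + 1)) * q ^ (-(t : ℤ)) / ((1 - pa) * pa ^ m))
      (cyclotomic (2 * m + 1) KK) := by
  have hc : (1 - aK) * aK ^ m ≠ 0 :=
    mul_ne_zero (sub_ne_zero.2 aK_ne_one.symm) (pow_ne_zero _ aK_ne_zero)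
  refine modCong_of_dvd (Q := X ^ t * C ((1 - aK) * aK ^ m))
    (R := C ((-1) ^ m * (1 - aK ^ (2 * m + 1))))
    ((isCoprime_mul_unit_right_left (isUnit_C.2 hc.isUnit) _ _).2
      (isCoprime_X_cyclotomic (2 * m).succ_pos).pow_left)
    (qPoch_mul_qPoch_eq_algebraMap aK r m) ?_ ?_
  · simp only [map_mul, map_sub, map_one, map_pow, map_neg, RatFunc.algebraMap_C,
      RatFunc.algebraMap_X, zpow_neg, zpow_natCast]
    have hq : q ^ t ≠ 0 := pow_ne_zero t RatFunc.X_ne_zero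
    have hpa : (1 - pa) * pa ^ m ≠ 0 :=
      mul_ne_zero one_sub_pa_ne_zero (pow_ne_zero m pa_ne_zero)
    rw [← pa, ← q]
    field_simp
    rw [mul_assoc, mul_div_cancel_right₀ _ hpa]
  · refine cyclotomic_dvd_of_forall_aeval_eq_zero fun ζ hζ => ?_
    simp only [map_mul, map_sub, map_one, map_pow, map_neg, aeval_X, aeval_C, map_prod,
      map_inv₀]
    exact sub_eq_zero.2 (h ζ _ hζ ((_root_.map_ne_zero _).2 aK_ne_zero))

theorem stmt9_general (n : ℕ) (hodd : Odd n) :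
    modCong
      (qPoch (pa * q ^ 2) (q ^ 2) ((n - 1) / 2) * qPoch (q ^ 2 / pa) (q ^ 2) ((n - 1) / 2))
      ((-1 : FF) ^ ((n - 1) / 2) * (1 - pa ^ n) * q ^ (-(((n : ℤ) - 1) ^ 2 / 4)) /
        ((1 - pa) * pa ^ ((n - 1) / 2)))
      (Polynomial.cyclotomic n KK) ∧
    modCong
      (qPoch (pa * q) (q ^ 2) ((n - 1) / 2) * qPoch (q / pa) (q ^ 2) ((n - 1) / 2))
      ((-1 : FF) ^ ((n - 1) / 2) * (1 - pa ^ n) * q ^ ((1 - (n : ℤ) ^ 2) / 4) /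
        ((1 - pa) * pa ^ ((n - 1) / 2)))
      (Polynomial.cyclotomic n KK) := by
  obtain ⟨m, rfl⟩ := hodd
  have hhalf : (2 * m + 1 - 1) / 2 = m := by omega
  have heven_exp : -((((2 * m + 1 : ℕ) : ℤ) - 1) ^ 2 / 4) = -((m * m : ℕ) : ℤ) := by
    push_cast
    rw [show ((2 * m + 1 : ℤ) - 1) ^ 2 = 4 * (m * m) by ring,
      Int.mul_ediv_cancel_left _ four_ne_zero]
  have hodd_exp : (1 - ((2 * m + 1 : ℕ) : ℤ) ^ 2) / 4 = -((m * (m + 1) : ℕ) : ℤ) := by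
    push_cast
    rw [show 1 - (2 * m + 1 : ℤ) ^ 2 = 4 * -(m * (m + 1)) by ring,
      Int.mul_ediv_cancel_left _ four_ne_zero]
  rw [hhalf, heven_exp, hodd_exp]
  constructor
  · exact modCong_qPoch_mul_qPoch m 2 (m * m) fun _ _ hζ hα => hζ.pow_mul_prod_even_eq hα
  · simpa only [pow_one] using
      modCong_qPoch_mul_qPoch m 1 (m * (m + 1)) fun _ _ hζ hα => hζ.pow_mul_prod_odd_eq hα

theorem stmt9 (n : ℕ) (hn : 0 < n) (hodd : Odd n) :
    modCong
      (qPoch (pa * q ^ 2) (q ^ 2) ((n - 1) / 2) * qPoch (q ^ 2 / pa) (q ^ 2) ((n - 1) / 2))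
      ((-1 : FF) ^ ((n - 1) / 2) * (1 - pa ^ n) * q ^ (-(((n : ℤ) - 1) ^ 2 / 4)) /
        ((1 - pa) * pa ^ ((n - 1) / 2)))
      (Polynomial.cyclotomic n KK) ∧
    modCong
      (qPoch (pa * q) (q ^ 2) ((n - 1) / 2) * qPoch (q / pa) (q ^ 2) ((n - 1) / 2))
      ((-1 : FF) ^ ((n - 1) / 2) * (1 - pa ^ n) * q ^ ((1 - (n : ℤ) ^ 2) / 4) /
        ((1 - pa) * pa ^ ((n - 1) / 2)))
      (Polynomial.cyclotomic n KK) :=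
  stmt9_general n hodd
end
end

section
/- The limit as a → 1 of (1-aq^n)(a-q^n)(1 - a^n - n(1-a)a^{(n-1)/2}) / ((1-a)^2 (1-a^n)) equals [n]^2 · (n^2-1)(1-q)^2 / 24, where [n] = (1-q^n)/(1-q) and n is a positive odd integer. -/
/-!
Write `n = 2m + 1`. The third factor of the numerator vanishes to order three at `a = 1`:
`1 - a ^ n - n (1 - a) a ^ m = (1 - a) ^ 3 Q_m(a)` with `Q_m(a) = ∑_{k<m} a ^ k [m - k]_a ^ 2`,
so that `Q_m(1) = ∑_{k=1}^m k ^ 2 = (n ^ 2 - 1) n / 24`, while `1 - a ^ n = (1 - a) [n]_a`. Cancelling `(1 - a) ^ 3` leaves a rational function that is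
continuous at `a = 1`, with value `(1 - q ^ n) ^ 2 Q_m(1) / n`.
-/

open Filter Topology Finset

section CommRing

variable {R : Type*} [CommRing R]

def cubicQuotient (m : ℕ) (a : R) : R :=
  ∑ k ∈ range m, a ^ k * (∑ j ∈ range (m - k), a ^ j) ^ 2

lemma cubicQuotient_succ (m : ℕ) (a : R) :
    cubicQuotient (m + 1) a = (∑ j ∈ range (m + 1), a ^ j) ^ 2 + a * cubicQuotient m a := by
  rw [cubicQuotient, sum_range_succ', cubicQuotient, mul_sum]
  simp only [Nat.succ_sub_succ, Nat.sub_zero, pow_zero, one_mul]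
  rw [add_comm]
  exact congrArg _ (sum_congr rfl fun k _ => by ring)

lemma one_sub_pow_sub_mul_pow_eq (m : ℕ) (a : R) :
    1 - a ^ (2 * m + 1) - (2 * m + 1 : ℕ) * (1 - a) * a ^ m = (1 - a) ^ 3 * cubicQuotient m a := by
  induction m with
  | zero => simp [cubicQuotient]
  | succ m ih =>
    have hgeom := mul_neg_geom_sum a (m + 1)
    rw [cubicQuotient_succ]
    push_cast at ih ⊢
    linear_combination
      a * ih - (1 - a) * ((1 - a) * ∑ j ∈ range (m + 1), a ^ j + (1 - a ^ (m + 1))) * hgeom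

lemma six_mul_cubicQuotient_one (m : ℕ) :
    6 * cubicQuotient m (1 : R) = m * (m + 1) * (2 * m + 1) := by
  induction m with
  | zero => simp [cubicQuotient]
  | succ m ih =>
    rw [cubicQuotient_succ]
    simp only [one_pow, sum_const, card_range, nsmul_eq_mul, mul_one, one_mul]
    push_cast
    linear_combination ih

end CommRing

lemma div_eq_cubicQuotient_div_geom_sum {K : Type*} [Field K] (m : ℕ) (c : K) {a : K}
    (ha : a ≠ 1) :
    c * (1 - a ^ (2 * m + 1) - (2 * m + 1 : ℕ) * (1 - a) * a ^ ((2 * m + 1 - 1) / 2)) /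
        ((1 - a) ^ 2 * (1 - a ^ (2 * m + 1))) =
      c * cubicQuotient m a / ∑ i ∈ range (2 * m + 1), a ^ i := by
  have ha' : (1 - a) ^ 3 ≠ 0 := pow_ne_zero 3 (sub_ne_zero.2 ha.symm)
  rw [show (2 * m + 1 - 1) / 2 = m by omega, one_sub_pow_sub_mul_pow_eq, ← mul_neg_geom_sum,
    ← mul_div_mul_right (c * cubicQuotient m a) _ ha']
  ring

theorem stmt11_general (n : ℕ) (hodd : Odd n) (q : ℂ) (hq : q ^ n ≠ 1) :
    Tendsto
      (fun a : ℂ =>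
        (1 - a * q ^ n) * (a - q ^ n) * (1 - a ^ n - n * (1 - a) * a ^ ((n - 1) / 2)) /
          ((1 - a) ^ 2 * (1 - a ^ n)))
      (nhdsWithin 1 {(1 : ℂ)}ᶜ)
      (nhds (((1 - q ^ n) / (1 - q)) ^ 2 * (((n : ℂ) ^ 2 - 1) * (1 - q) ^ 2 / 24))) := by
  obtain ⟨m, rfl⟩ := hodd
  have hq1 : 1 - q ≠ 0 := sub_ne_zero.2 fun h => hq (by rw [← h, one_pow])
  have hsum : ∑ i ∈ range (2 * m + 1), (1 : ℂ) ^ i = (2 * m + 1 : ℕ) := by simp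
  set g : ℂ → ℂ := fun a => (1 - a * q ^ (2 * m + 1)) * (a - q ^ (2 * m + 1)) *
    cubicQuotient m a / ∑ i ∈ range (2 * m + 1), a ^ i
  have hg : ContinuousAt g 1 := by
    refine ContinuousAt.div (by unfold cubicQuotient; fun_prop) (by fun_prop) ?_
    rw [hsum]
    exact Nat.cast_ne_zero.2 (2 * m).succ_ne_zero
  have hg1 : g 1 = ((1 - q ^ (2 * m + 1)) / (1 - q)) ^ 2 *
      ((((2 * m + 1 : ℕ) : ℂ) ^ 2 - 1) * (1 - q) ^ 2 / 24) := by
    have hn0 : (2 * m + 1 : ℂ) ≠ 0 := by exact_mod_cast (2 * m).succ_ne_zero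
    simp only [g, hsum]
    push_cast
    field_simp
    linear_combination 4 * six_mul_cubicQuotient_one (R := ℂ) m
  rw [← hg1]
  refine (hg.tendsto.mono_left nhdsWithin_le_nhds).congr' ?_
  filter_upwards [self_mem_nhdsWithin] with a ha
  exact (div_eq_cubicQuotient_div_geom_sum m _ ha).symm

theorem stmt11 (n : ℕ) (hn : 0 < n) (hodd : Odd n) (q : ℂ) (hq : q ^ n ≠ 1) :
    Tendsto
      (fun a : ℂ =>
        (1 - a * q ^ n) * (a - q ^ n) * (1 - a ^ n - n * (1 - a) * a ^ ((n - 1) / 2)) /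
          ((1 - a) ^ 2 * (1 - a ^ n)))
      (nhdsWithin 1 {(1 : ℂ)}ᶜ)
      (nhds (((1 - q ^ n) / (1 - q)) ^ 2 * (((n : ℂ) ^ 2 - 1) * (1 - q) ^ 2 / 24))) :=
  stmt11_general n hodd q hq
end

section
/- Let n be a positive odd integer with n ≡ 3 (mod 4), and M = (n-1)/2 or n-1. Then the two expressions [n]^2 q^{(1-n)/2} (1 + [n]^2 (n^2-1)(1-q)^2/24) · (q^3;q^4)_{(n-1)/2}/(q^5;q^4)_{(n-1)/2} and [n]^2 q^{(1+n)/2} · (q^3;q^4)_{(n-1)/2}/(q^5;q^4)_{(n-1)/2} are congruent modulo [n]Φ_n(q)^3. -/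
open Finset

noncomputable section

/-!
Multiplying the difference by `q^m (q^5;q^4)_m`, `m = (n-1)/2`, and using `[n](1-q) = 1 - q^n`
leaves `[n]^3 (1-q) (1 + (n^2-1)(1-q^n)/24) (q^3;q^4)_m`. Factor every `1 - q^k` into cyclotomic
polynomials and compare multiplicities of `Φ_e` for `e ∣ n`: since `n ≡ 3 (mod 4)`, the numerator
contains `1 - q^n`, which supplies the missing `Φ_n`, and for odd `e` the shift
`j ↦ j + (e+1)/2` matches all but at most one factor `Φ_e` of `(q^5;q^4)_m` with one of
`(q^3;q^4)_m`. The `Φ_e` with `e ∤ n` go into the denominator, which stays coprime to `[n]Φ_n^3`.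
-/

open Polynomial

lemma isCoprime_multiset_prod_left {α : Type*} [CommSemiring α] {s : Multiset α} {x : α}
    (h : ∀ a ∈ s, IsCoprime a x) : IsCoprime s.prod x := by
  induction s using Multiset.induction_on with
  | empty => simpa using isCoprime_one_left
  | cons a s ih =>
    rw [Multiset.prod_cons]
    exact (h a (Multiset.mem_cons_self a s)).mul_left
      (ih fun b hb => h b (Multiset.mem_cons_of_mem hb))

lemma Polynomial.cyclotomic.isCoprime {K : Type*} [Field K] [CharZero K] {a b : ℕ} (h : a ≠ b) :
    IsCoprime (cyclotomic a K) (cyclotomic b K) := by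
  simpa using (cyclotomic.isCoprime_rat h).map (mapRingHom (algebraMap ℚ K))

section CyclotomicProd

variable (R : Type*) [CommRing R]

def cyclotomicProd (s : Multiset ℕ) : R[X] := (s.map (cyclotomic · R)).prod

variable {R}

lemma cyclotomicProd_add (s t : Multiset ℕ) :
    cyclotomicProd R (s + t) = cyclotomicProd R s * cyclotomicProd R t := by
  simp [cyclotomicProd]

lemma cyclotomicProd_nsmul (k : ℕ) (s : Multiset ℕ) :
    cyclotomicProd R (k • s) = cyclotomicProd R s ^ k := by
  induction k with
  | zero => simp [cyclotomicProd]
  | succ k ih => rw [succ_nsmul, cyclotomicProd_add, ih, pow_succ]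

lemma cyclotomicProd_singleton (a : ℕ) : cyclotomicProd R {a} = cyclotomic a R := by
  simp [cyclotomicProd]

lemma cyclotomicProd_dvd_of_le {s t : Multiset ℕ} (h : s ≤ t) :
    cyclotomicProd R s ∣ cyclotomicProd R t :=
  Multiset.prod_dvd_prod_of_le (Multiset.map_le_map h)

lemma cyclotomicProd_divisors {k : ℕ} (hk : 0 < k) :
    cyclotomicProd R k.divisors.val = X ^ k - 1 := by
  rw [cyclotomicProd, ← Finset.prod_eq_multiset_prod, prod_cyclotomic_eq_X_pow_sub_one hk]

lemma cyclotomicProd_divisors_erase_one {k : ℕ} (hk : 0 < k) :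
    cyclotomicProd R (k.divisors.erase 1).val = ∑ i ∈ range k, X ^ i := by
  rw [cyclotomicProd, ← Finset.prod_eq_multiset_prod, prod_cyclotomic_eq_geom_sum hk]

lemma isCoprime_cyclotomicProd {K : Type*} [Field K] [CharZero K] {s t : Multiset ℕ}
    (h : ∀ a ∈ s, ∀ b ∈ t, a ≠ b) : IsCoprime (cyclotomicProd K s) (cyclotomicProd K t) :=
  isCoprime_multiset_prod_left <| Multiset.forall_mem_map_iff.2 fun a ha =>
    (isCoprime_multiset_prod_left <| Multiset.forall_mem_map_iff.2 fun b hb =>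
      (cyclotomic.isCoprime (h a ha b hb)).symm).symm

def divisorsMultiset (f : ℕ → ℕ) (m : ℕ) : Multiset ℕ :=
  (range m).val.bind fun j => (f j).divisors.val

lemma count_divisorsMultiset {f : ℕ → ℕ} (hf : ∀ j, f j ≠ 0) (m e : ℕ) :
    (divisorsMultiset f m).count e = #{j ∈ range m | e ∣ f j} := by
  rw [divisorsMultiset, Multiset.count_bind, card_filter, sum_eq_multiset_sum]
  refine congrArg _ (Multiset.map_congr rfl fun j _ => ?_)
  rw [Multiset.count_eq_of_nodup (f j).divisors.nodup]
  simp [hf j]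

lemma prod_one_sub_X_pow {f : ℕ → ℕ} (hf : ∀ j, 0 < f j) (m : ℕ) :
    ∏ j ∈ range m, (1 - X ^ f j : R[X]) =
      (-1) ^ m * cyclotomicProd R (divisorsMultiset f m) := by
  rw [cyclotomicProd, divisorsMultiset, Multiset.map_bind, Multiset.prod_bind,
    ← Finset.prod_eq_multiset_prod]
  calc ∏ j ∈ range m, (1 - X ^ f j : R[X]) = ∏ j ∈ range m, (-1) * (X ^ f j - 1) :=
        prod_congr rfl fun _ _ => by ring
    _ = _ := by
        rw [prod_mul_distrib, prod_const, card_range]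
        exact congrArg _ (prod_congr rfl fun j _ => (cyclotomicProd_divisors (hf j)).symm)

end CyclotomicProd

lemma card_filter_dvd_five_add_four_mul_le {e : ℕ} (he : Odd e) (m : ℕ) :
    #{j ∈ range m | e ∣ 5 + 4 * j} ≤ #{j ∈ range m | e ∣ 3 + 4 * j} + 1 := by
  set h := (e + 1) / 2
  set A := {j ∈ range m | e ∣ 5 + 4 * j}
  have shifted : #{j ∈ A | j + h < m} ≤ #{j ∈ range m | e ∣ 3 + 4 * j} := by
    refine card_le_card_of_injOn (· + h) (fun j hj => ?_) fun _ _ _ _ hab => add_right_cancel hab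
    simp only [A, coe_filter, mem_filter, mem_range, Set.mem_ofPred_eq] at hj ⊢
    have : 3 + 4 * (j + h) = 5 + 4 * j + 2 * e := by obtain ⟨k, rfl⟩ := he; omega
    exact ⟨hj.2, this ▸ dvd_add hj.1.2 (dvd_mul_left e 2)⟩
  have tail : #{j ∈ A | ¬ j + h < m} ≤ 1 := by
    refine card_le_one.2 fun a ha b hb => ?_
    simp only [A, mem_filter, mem_range] at ha hb
    have hab : a ≡ b [MOD e] :=
      Nat.ModEq.cancel_left_of_coprime (Nat.Coprime.pow_right 2 he.coprime_two_right) <|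
        Nat.ModEq.add_left_cancel' 5 <|
          (Nat.modEq_zero_iff_dvd.2 ha.1.2).trans (Nat.modEq_zero_iff_dvd.2 hb.1.2).symm
    exact hab.eq_of_abs_lt (abs_sub_lt_iff.2 ⟨by omega, by omega⟩)
  have := card_filter_add_card_filter_not (s := A) (fun j => j + h < m)
  omega

lemma divisors_multiset_le_of_mod_four_eq_three {n m : ℕ} (hmod : n % 4 = 3)
    (hm : n = 2 * m + 1) :
    (n.divisors.erase 1).val + 3 • {n} + (divisorsMultiset (5 + 4 * ·) m).filter (· ∣ n) ≤
      2 • (n.divisors.erase 1).val + n.divisors.val + divisorsMultiset (3 + 4 * ·) m := by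
  rw [Multiset.le_iff_count]
  intro e
  simp only [Multiset.count_add, Multiset.count_nsmul, Multiset.count_singleton,
    Multiset.count_filter, count_divisorsMultiset (fun j => by omega : ∀ j, 5 + 4 * j ≠ 0),
    count_divisorsMultiset (fun j => by omega : ∀ j, 3 + 4 * j ≠ 0),
    Multiset.count_eq_of_nodup (Finset.nodup _), Finset.mem_val, Finset.mem_erase,
    Nat.mem_divisors]
  obtain rfl | hen := eq_or_ne e n
  · have no_five : #{j ∈ range m | e ∣ 5 + 4 * j} = 0 := by
      refine card_eq_zero.2 (filter_eq_empty_iff.2 fun j hj hdvd => ?_)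
      have := Nat.eq_of_dvd_of_lt_two_mul (by omega) hdvd (by rw [mem_range] at hj; omega)
      omega
    have some_three : 0 < #{j ∈ range m | e ∣ 3 + 4 * j} :=
      card_pos.2 ⟨(e - 3) / 4, mem_filter.2 ⟨mem_range.2 (by omega),
        by rw [show 3 + 4 * ((e - 3) / 4) = e by omega]⟩⟩
    simp only [ne_eq, show e ≠ 1 by omega, show e ≠ 0 by omega, not_false_eq_true, dvd_refl,
      and_self, ↓reduceIte, no_five]
    omega
  · by_cases hdvd : e ∣ n
    · have he : Odd e := Odd.of_dvd_nat (Nat.odd_iff.2 (by omega)) hdvd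
      have := card_filter_dvd_five_add_four_mul_le he m
      simp only [ne_eq, hdvd, hen, show n ≠ 0 by omega, not_false_eq_true, and_true, ↓reduceIte]
      split_ifs <;> omega
    · simp [hdvd, hen]

lemma geom_mul_cyclotomic_pow_mul_dvd {R : Type*} [CommRing R] {n m : ℕ} (hmod : n % 4 = 3)
    (hm : n = 2 * m + 1) :
    (∑ i ∈ range n, X ^ i) * cyclotomic n R ^ 3 * ∏ j ∈ range m, (1 - X ^ (5 + 4 * j)) ∣
      (∑ i ∈ range n, X ^ i) ^ 3 * (1 - X) * (∏ j ∈ range m, (1 - X ^ (3 + 4 * j))) *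
        cyclotomicProd R ((divisorsMultiset (5 + 4 * ·) m).filter (¬ · ∣ n)) := by
  have hn : 0 < n := by omega
  obtain ⟨c, hc⟩ :=
    cyclotomicProd_dvd_of_le (R := R) (divisors_multiset_le_of_mod_four_eq_three hmod hm)
  simp only [cyclotomicProd_add, cyclotomicProd_nsmul, cyclotomicProd_singleton,
    cyclotomicProd_divisors hn, cyclotomicProd_divisors_erase_one hn] at hc
  have split := congrArg (cyclotomicProd R)
    (Multiset.filter_add_not (· ∣ n) (divisorsMultiset (5 + 4 * ·) m))
  rw [cyclotomicProd_add] at split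
  rw [prod_one_sub_X_pow (fun j => by omega), prod_one_sub_X_pow (fun j => by omega), ← split]
  refine ⟨-c, ?_⟩
  have geom := geom_sum_mul (X : R[X]) n
  set Pk := cyclotomicProd R ((divisorsMultiset (5 + 4 * ·) m).filter (¬ · ∣ n))
  linear_combination -(-1) ^ m * Pk * hc -
    (-1) ^ m * (∑ i ∈ range n, X ^ i) ^ 2 * cyclotomicProd R (divisorsMultiset (3 + 4 * ·) m) *
      Pk * geom

lemma isCoprime_X_pow_mul_cyclotomicProd {K : Type*} [Field K] [CharZero K] {n : ℕ}
    (hn : 0 < n) (k : ℕ) {s : Multiset ℕ} (hs : ∀ a ∈ s, ¬ a ∣ n) :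
    IsCoprime (X ^ k * cyclotomicProd K s) ((∑ i ∈ range n, X ^ i) * cyclotomic n K ^ 3) := by
  have hX : IsCoprime (X : K[X]) (X ^ n - 1) :=
    ⟨X ^ (n - 1), -1, by rw [← pow_succ, Nat.sub_add_cancel hn]; ring⟩
  have hcyc : IsCoprime (cyclotomicProd K s) (X ^ n - 1) := by
    rw [← cyclotomicProd_divisors hn]
    exact isCoprime_cyclotomicProd fun a ha b hb hab =>
      hs a ha (hab ▸ Nat.dvd_of_mem_divisors hb)
  have hdvd : (∑ i ∈ range n, X ^ i) * cyclotomic n K ^ 3 ∣ (X ^ n - 1) ^ 4 := by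
    have := mul_dvd_mul (Dvd.intro _ (geom_sum_mul X n))
      (pow_dvd_pow_of_dvd (cyclotomic.dvd_X_pow_sub_one n K) 3)
    rwa [← pow_succ'] at this
  exact ((hX.pow_left.mul_left hcyc).pow_right).of_isCoprime_of_dvd_right hdvd

lemma one_sub_X_pow_ne_zero {R : Type*} [CommRing R] [Nontrivial R] {k : ℕ} (hk : 0 < k) :
    (1 - X ^ k : R[X]) ≠ 0 := by
  rw [← neg_sub, neg_ne_zero, ← C_1]
  exact X_pow_sub_C_ne_zero hk 1

local notation "ι" => algebraMap KK[X] FF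

lemma q_eq_algebraMap_X : q = ι X := RatFunc.algebraMap_X.symm

lemma qPoch_q_pow (a b m : ℕ) :
    qPoch (q ^ a) (q ^ b) m = ι (∏ j ∈ range m, (1 - X ^ (a + b * j))) := by
  simp [qPoch, q_eq_algebraMap_X, pow_add, pow_mul]

lemma algebraMap_Pn_mul_one_sub_q (n : ℕ) : ι (Pn n) * (1 - q) = 1 - q ^ n := by
  rw [Pn, q_eq_algebraMap_X]
  simpa using congrArg ι (geom_sum_mul_neg X n)

lemma qInt_eq_algebraMap (n : ℕ) : qInt n = ι (Pn n) := by
  have h1q : (1 : FF) - q ≠ 0 := by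
    rw [q_eq_algebraMap_X, ← map_one ι, ← map_sub,
      map_ne_zero_iff _ (RatFunc.algebraMap_injective KK)]
    simpa using one_sub_X_pow_ne_zero (R := KK) one_pos
  rw [qInt, div_eq_iff h1q, algebraMap_Pn_mul_one_sub_q]

lemma modCong_of_dvd_s12 {A B : FF} {D f g h : KK[X]} (hAB : A - B = ι f / ι g) (hg : g ≠ 0)
    (hh : IsCoprime h D) (hdvd : D * g ∣ f * h) : modCong A B D := by
  obtain ⟨P, hP⟩ := hdvd
  refine ⟨P, h, hh, ?_⟩
  have hg' : ι g ≠ 0 := (map_ne_zero_iff _ (RatFunc.algebraMap_injective KK)).2 hg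
  rw [hAB, div_mul_eq_mul_div, div_eq_iff hg', ← map_mul, hP]
  simp only [map_mul]
  ring

lemma sub_eq_cube_mul_of_mul_one_sub_eq {F : Type*} [Field F] {x g : F} (c r : F) (m : ℕ)
    (hx : x ≠ 0) (hg : g * (1 - x) = 1 - x ^ (2 * m + 1)) :
    g ^ 2 * (x ^ m)⁻¹ * (1 + g ^ 2 * (c * (1 - x) ^ 2 / 24)) * r - g ^ 2 * x ^ (m + 1) * r =
      g ^ 3 * (1 - x) * (1 + c / 24 * (1 - x ^ (2 * m + 1))) * r / x ^ m := by
  field_simp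
  linear_combination (g ^ 3 * r * c * (1 - x) / 24 - g ^ 2 * r) * hg

theorem stmt12_general (n : ℕ) (hmod : n % 4 = 3) :
    modCong
      ((qInt n) ^ 2 * q ^ ((1 - (n : ℤ)) / 2) *
        (1 + (qInt n) ^ 2 * (((n : FF) ^ 2 - 1) * (1 - q) ^ 2 / 24)) *
        (qPoch (q ^ 3) (q ^ 4) ((n - 1) / 2) / qPoch (q ^ 5) (q ^ 4) ((n - 1) / 2)))
      ((qInt n) ^ 2 * q ^ ((1 + n) / 2) *
        (qPoch (q ^ 3) (q ^ 4) ((n - 1) / 2) / qPoch (q ^ 5) (q ^ 4) ((n - 1) / 2)))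
      (Pn n * (Polynomial.cyclotomic n KK) ^ 3) := by
  obtain ⟨m, hm⟩ : ∃ m, n = 2 * m + 1 := ⟨n / 2, by omega⟩
  have hhalf : (n - 1) / 2 = m := by omega
  have hneg : (1 - (n : ℤ)) / 2 = -(m : ℤ) := by omega
  have hpos : (1 + n) / 2 = m + 1 := by omega
  rw [hhalf, hneg, hpos, zpow_neg, zpow_natCast, qInt_eq_algebraMap, qPoch_q_pow, qPoch_q_pow]
  refine modCong_of_dvd_s12
    (f := Pn n ^ 3 * (1 - X) * (∏ j ∈ range m, (1 - X ^ (3 + 4 * j))) *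
      (1 + C (((n : KK) ^ 2 - 1) / 24) * (1 - X ^ n)))
    (g := X ^ m * ∏ j ∈ range m, (1 - X ^ (5 + 4 * j)))
    (h := X ^ m * cyclotomicProd KK ((divisorsMultiset (5 + 4 * ·) m).filter (¬ · ∣ n)))
    ?_ ?_ ?_ ?_
  · rw [sub_eq_cube_mul_of_mul_one_sub_eq _ _ m (q_eq_algebraMap_X ▸ RatFunc.X_ne_zero)
      (hm ▸ algebraMap_Pn_mul_one_sub_q n), ← hm]
    simp only [map_mul, map_pow, map_sub, map_one, map_add, ← q_eq_algebraMap_X,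
      RatFunc.algebraMap_C, map_div₀, map_natCast, map_ofNat]
    ring
  · exact mul_ne_zero (pow_ne_zero _ X_ne_zero)
      (prod_ne_zero_iff.2 fun j _ => one_sub_X_pow_ne_zero (by omega))
  · exact isCoprime_X_pow_mul_cyclotomicProd (by omega) m fun _ ha => (Multiset.mem_filter.1 ha).2
  · rw [Pn]
    convert mul_dvd_mul (geom_mul_cyclotomic_pow_mul_dvd (R := KK) hmod hm)
      (dvd_mul_left (X ^ m) (1 + C (((n : KK) ^ 2 - 1) / 24) * (1 - X ^ n))) using 1 <;> ring

theorem stmt12 (n : ℕ) (hn : 0 < n) (hmod : n % 4 = 3) :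
    modCong
      ((qInt n) ^ 2 * q ^ ((1 - (n : ℤ)) / 2) *
        (1 + (qInt n) ^ 2 * (((n : FF) ^ 2 - 1) * (1 - q) ^ 2 / 24)) *
        (qPoch (q ^ 3) (q ^ 4) ((n - 1) / 2) / qPoch (q ^ 5) (q ^ 4) ((n - 1) / 2)))
      ((qInt n) ^ 2 * q ^ ((1 + n) / 2) *
        (qPoch (q ^ 3) (q ^ 4) ((n - 1) / 2) / qPoch (q ^ 5) (q ^ 4) ((n - 1) / 2)))
      (Pn n * (Polynomial.cyclotomic n KK) ^ 3) :=
  stmt12_general n hmod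
end
end
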